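/- Let R, P, T, n be positive integers with P ≥ 1, let γ > 0, σ > 0, let b : Fin P → {−1, 1} be a fixed payload with i-th bit b_i, and let c_i ∈ {−1,1}^R be a fixed spreading code. Let the entries of the R × (P−1) matrix C_{¬i} be independent random variables, each uniform on {−1, 1}, and let w̃ ∈ ℝ^R be a random vector, independent of C_{¬i}, whose components are independent centered Gaussians of variance T·n·σ². Define the normalized decoding statistic y = (1/(T·γ·R)) · ( T·γ·R·b_i + T·γ·(c_iᵀ C_{¬i} b_{¬i}) + c_iᵀ w̃ ), where b_{¬i} ∈ {−1,1}^{P−1} is the payload with the i-th entry removed. Then the expectation of y equals b_i and the variance of y equals (P−1)/R + n·σ²/(T·R·γ²). -/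

import Mathlib

open MeasureTheory ProbabilityTheory

/-- The uniform distribution on `{−1, 1} ⊂ ℝ`. -/
noncomputable def pmOneMeasure : Measure ℝ :=
  (2 : ENNReal)⁻¹ • Measure.dirac (-1 : ℝ) + (2 : ENNReal)⁻¹ • Measure.dirac (1 : ℝ)

/-! After cancelling the scaling `T γ R`, the statistic is `b_i` plus a linear combination of
independent centred variables: each sign `C_{jk}` enters with coefficient `c_j b_k / R` and each
noise component `w̃_j` with coefficient `c_j / (T γ R)`. Hence the mean is `b_i`, and the variance
is the sum of the squared coefficients times the variances `1` and `T n σ²`; since `c_j² = b_k² = 1`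
this is `R (P-1) / R² + R T n σ² / (T γ R)²`. -/

instance : IsProbabilityMeasure pmOneMeasure :=
  ⟨by simp [pmOneMeasure, ENNReal.inv_two_add_inv_two]⟩

lemma integral_pmOneMeasure (g : ℝ → ℝ) :
    ∫ x, g x ∂pmOneMeasure = (g (-1) + g 1) / 2 := by
  have hint (a : ℝ) : Integrable g ((2 : ENNReal)⁻¹ • Measure.dirac a) :=
    (integrable_dirac enorm_lt_top).smul_measure (by simp)
  rw [pmOneMeasure, integral_add_measure (hint _) (hint _), integral_smul_measure,
    integral_smul_measure, integral_dirac, integral_dirac]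
  norm_num
  ring

lemma ae_abs_le_one_pmOneMeasure : ∀ᵐ x ∂pmOneMeasure, |x| ≤ 1 := by
  simp [pmOneMeasure, ae_dirac_eq]

lemma memLp_id_pmOneMeasure (p : ENNReal) : MemLp id p pmOneMeasure :=
  .of_bound aestronglyMeasurable_id 1 ae_abs_le_one_pmOneMeasure

lemma integral_id_pmOneMeasure : ∫ x, x ∂pmOneMeasure = 0 := by
  simp [integral_pmOneMeasure]

lemma variance_id_pmOneMeasure : Var[id; pmOneMeasure] = 1 := by
  rw [variance_of_integral_eq_zero aemeasurable_id integral_id_pmOneMeasure,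
    integral_pmOneMeasure]
  norm_num

section LinearCombination

variable {Ω ι : Type*} [MeasurableSpace Ω] {μ : Measure Ω} [IsProbabilityMeasure μ] [Fintype ι]
  {X : ι → Ω → ℝ}

lemma integral_const_add_sum_mul (hX : ∀ a, Integrable (X a) μ) (c : ℝ) (l : ι → ℝ) :
    μ[fun ω => c + ∑ a, l a * X a ω] = c + ∑ a, l a * μ[X a] := by
  rw [integral_add (integrable_const c) (integrable_finsetSum _ fun a _ => (hX a).const_mul _),
    integral_finsetSum _ fun a _ => (hX a).const_mul _]
  simp [integral_const_mul]

lemma variance_const_add_sum_mul (hX : ∀ a, MemLp (X a) 2 μ) (hind : iIndepFun X μ)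
    (c : ℝ) (l : ι → ℝ) :
    Var[fun ω => c + ∑ a, l a * X a ω; μ] = ∑ a, l a ^ 2 * Var[X a; μ] := by
  have hlX : ∀ a ∈ Finset.univ, MemLp (fun ω => l a * X a ω) 2 μ :=
    fun a _ => (hX a).const_mul _
  have hsum : (fun ω => ∑ a, l a * X a ω) = ∑ a, fun ω => l a * X a ω := by
    ext ω; simp
  rw [variance_const_add (memLp_finsetSum _ hlX).aestronglyMeasurable, hsum, IndepFun.variance_sum hlX fun a _ b _ hab =>
      (hind.indepFun hab).comp (measurable_const_mul _) (measurable_const_mul _)]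
  simp_rw [variance_const_mul]

end LinearCombination

namespace ProbabilityTheory

variable {Ω 𝓧 : Type*} [MeasurableSpace Ω] [MeasurableSpace 𝓧] {μ : Measure Ω} {X : Ω → 𝓧}

lemma HasLaw.of_map_eq {ν : Measure 𝓧} [NeZero ν] (h : μ.map X = ν) : HasLaw X ν μ :=
  ⟨.of_map_ne_zero (h ▸ NeZero.ne ν), h⟩

lemma HasLaw.memLp [NormedAddCommGroup 𝓧] [BorelSpace 𝓧] {ν : Measure 𝓧} {p : ENNReal}
    (hX : HasLaw X ν μ) (hν : MemLp id p ν) : MemLp X p μ :=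
  (hX.identDistrib HasLaw.id).memLp_iff.mpr hν

end ProbabilityTheory

theorem fedcomm_decoding_statistic_mean_variance_general
    (R T n Pm1 : ℕ) (hR : 0 < R) (hT : 0 < T)
    (γ σ : ℝ) (hγ : 0 < γ)
    (b : Fin (Pm1 + 1) → ℝ) (hb : ∀ k, b k = 1 ∨ b k = -1) (i : Fin (Pm1 + 1))
    (c : Fin R → ℝ) (hc : ∀ j, c j = 1 ∨ c j = -1)
    {Ω : Type*} [MeasurableSpace Ω] (μ : Measure Ω) [IsProbabilityMeasure μ]
    (f : (Fin R × Fin Pm1) ⊕ Fin R → Ω → ℝ)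
    (hindep : iIndepFun f μ)
    (hlawC : ∀ p : Fin R × Fin Pm1, Measure.map (f (Sum.inl p)) μ = pmOneMeasure)
    (hlawW : ∀ j : Fin R, Measure.map (f (Sum.inr j)) μ =
      gaussianReal 0 (Real.toNNReal ((T : ℝ) * (n : ℝ) * σ ^ 2))) :
    (μ[fun ω => (1 / ((T : ℝ) * γ * R)) *
        ((T : ℝ) * γ * R * b i
          + (T : ℝ) * γ * (∑ j : Fin R, ∑ k : Fin Pm1,
              c j * f (Sum.inl (j, k)) ω * b (i.succAbove k))
          + ∑ j : Fin R, c j * f (Sum.inr j) ω)] = b i) ∧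
      variance (fun ω => (1 / ((T : ℝ) * γ * R)) *
        ((T : ℝ) * γ * R * b i
          + (T : ℝ) * γ * (∑ j : Fin R, ∑ k : Fin Pm1,
              c j * f (Sum.inl (j, k)) ω * b (i.succAbove k))
          + ∑ j : Fin R, c j * f (Sum.inr j) ω)) μ =
        (((Pm1 : ℝ) + 1) - 1) / R + (n : ℝ) * σ ^ 2 / ((T : ℝ) * R * γ ^ 2) := by
  set v := Real.toNNReal ((T : ℝ) * (n : ℝ) * σ ^ 2)
  have hv : (v : ℝ) = T * n * σ ^ 2 := Real.coe_toNNReal _ (by positivity)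
  let ν : (Fin R × Fin Pm1) ⊕ Fin R → Measure ℝ :=
    Sum.elim (fun _ => pmOneMeasure) (fun _ => gaussianReal 0 v)
  have hlaw : ∀ a, HasLaw (f a) (ν a) μ := Sum.forall.2
    ⟨fun p => HasLaw.of_map_eq (ν := pmOneMeasure) (hlawC p),
      fun j => HasLaw.of_map_eq (ν := gaussianReal 0 v) (hlawW j)⟩
  have hmem : ∀ a, MemLp (f a) 2 μ := Sum.forall.2
    ⟨fun p => (hlaw _).memLp (memLp_id_pmOneMeasure 2),
      fun j => (hlaw _).memLp (memLp_id_gaussianReal 2)⟩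
  let l : (Fin R × Fin Pm1) ⊕ Fin R → ℝ :=
    Sum.elim (fun p => c p.1 * b (i.succAbove p.2) / R) (fun j => c j / (T * γ * R))
  have hstat : (fun ω => (1 / ((T : ℝ) * γ * R)) *
        ((T : ℝ) * γ * R * b i
          + (T : ℝ) * γ * (∑ j : Fin R, ∑ k : Fin Pm1,
              c j * f (Sum.inl (j, k)) ω * b (i.succAbove k))
          + ∑ j : Fin R, c j * f (Sum.inr j) ω))
      = fun ω => b i + ∑ a, l a * f a ω := by
    ext ω
    simp only [l, Fintype.sum_sum_type, Fintype.sum_prod_type, Sum.elim_inl, Sum.elim_inr,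
      div_mul_eq_mul_div, ← Finset.sum_div]
    field_simp
    simp only [mul_right_comm _ (b _)]
    ring
  have hc2 (j : Fin R) : c j ^ 2 = 1 := by rcases hc j with h | h <;> simp [h]
  have hb2 (k : Fin (Pm1 + 1)) : b k ^ 2 = 1 := by rcases hb k with h | h <;> simp [h]
  rw [hstat, integral_const_add_sum_mul (fun a => (hmem a).integrable one_le_two),
    variance_const_add_sum_mul hmem hindep, Fintype.sum_sum_type, Fintype.sum_sum_type]
  simp only [(hlaw _).integral_eq, (hlaw _).variance_eq, ν, l, Sum.elim_inl, Sum.elim_inr,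
    integral_id_pmOneMeasure, integral_id_gaussianReal, variance_id_pmOneMeasure,
    variance_id_gaussianReal, div_pow, mul_pow, hc2, hb2, hv, Finset.sum_const, Finset.card_univ,
    Fintype.card_prod, Fintype.card_fin, nsmul_eq_mul]
  constructor
  · simp
  · field_simp
    push_cast
    ring

/-- FedComm Theorem 1, part 1: writing the payload length as `P = Pm1 + 1 ≥ 1`,
let `b : Fin P → {−1,1}` be the payload with `i`-th bit `b i`, `c ∈ {−1,1}^R`
the spreading code of bit `i`, the entries of the `R × (P−1)` matrix `C_{¬i}`
(given by `f ∘ Sum.inl`) independent uniform on `{−1,1}`, and the gradient-noise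
vector `w̃` (given by `f ∘ Sum.inr`) independent of `C_{¬i}` with independent
`N(0, T·n·σ²)` components.  The normalized decoding statistic
`y = (1/(T·γ·R))·(T·γ·R·b_i + T·γ·(cᵀ C_{¬i} b_{¬i}) + cᵀ w̃)`,
where `b_{¬i} = b ∘ i.succAbove` is the payload with the `i`-th entry removed,
has mean `b i` and variance `(P−1)/R + n·σ²/(T·R·γ²)`. -/
theorem fedcomm_decoding_statistic_mean_variance
    (R T n Pm1 : ℕ) (hR : 0 < R) (hT : 0 < T) (hn : 0 < n)
    (γ σ : ℝ) (hγ : 0 < γ) (hσ : 0 < σ)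
    (b : Fin (Pm1 + 1) → ℝ) (hb : ∀ k, b k = 1 ∨ b k = -1) (i : Fin (Pm1 + 1))
    (c : Fin R → ℝ) (hc : ∀ j, c j = 1 ∨ c j = -1)
    {Ω : Type*} [MeasurableSpace Ω] (μ : Measure Ω) [IsProbabilityMeasure μ]
    (f : (Fin R × Fin Pm1) ⊕ Fin R → Ω → ℝ) (hmeas : ∀ a, Measurable (f a))
    (hindep : iIndepFun f μ)
    (hlawC : ∀ p : Fin R × Fin Pm1, Measure.map (f (Sum.inl p)) μ = pmOneMeasure)
    (hlawW : ∀ j : Fin R, Measure.map (f (Sum.inr j)) μ =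
      gaussianReal 0 (Real.toNNReal ((T : ℝ) * (n : ℝ) * σ ^ 2))) :
    (μ[fun ω => (1 / ((T : ℝ) * γ * R)) *
        ((T : ℝ) * γ * R * b i
          + (T : ℝ) * γ * (∑ j : Fin R, ∑ k : Fin Pm1,
              c j * f (Sum.inl (j, k)) ω * b (i.succAbove k))
          + ∑ j : Fin R, c j * f (Sum.inr j) ω)] = b i) ∧
      variance (fun ω => (1 / ((T : ℝ) * γ * R)) *
        ((T : ℝ) * γ * R * b i
          + (T : ℝ) * γ * (∑ j : Fin R, ∑ k : Fin Pm1,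
              c j * f (Sum.inl (j, k)) ω * b (i.succAbove k))
          + ∑ j : Fin R, c j * f (Sum.inr j) ω)) μ =
        (((Pm1 : ℝ) + 1) - 1) / R + (n : ℝ) * σ ^ 2 / ((T : ℝ) * R * γ ^ 2) :=
  fedcomm_decoding_statistic_mean_variance_general R T n Pm1 hR hT γ σ hγ b hb i c hc μ f hindep
    hlawC hlawW
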